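/- There exists a constant C > 0 such that for every η ∈ (0, π/2] the following four quantities are well defined and bounded by C: (i) 1 + (Λᵒ(η)/Λᵃ(η))·W₁(Λᵃ(η))/W₁(Λᵒ(η)); (ii) 1 + W₁(Λᵃ(η))/W₁(Λᵒ(η)); (iii) (1 + W₁(Λᵃ(π−η))/W₁(Λᵒ(π−η)))·W₃(Λᵃ(π−η))/W₃(Λᵃ(η)); (iv) (Λᵃ(π−η)/Λᵃ(η))·(1 + (Λᵒ(π−η)/Λᵃ(π−η))·W₁(Λᵃ(π−η))/W₁(Λᵒ(π−η)))·W₃(Λᵃ(π−η))/W₃(Λᵃ(η)). -/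

import Mathlib

open Real

noncomputable def Delta (η : ℝ) : ℝ :=
  1 + 268 * Real.cos (η / 2) ^ 2 - 44 * Real.cos (η / 2) ^ 4

noncomputable def Lama (η : ℝ) : ℝ :=
  120 * Real.sin (η / 2) ^ 2 / (11 + 4 * Real.cos (η / 2) ^ 2 + Real.sqrt (Delta η))

noncomputable def Lamo (η : ℝ) : ℝ :=
  (22 + 8 * Real.cos (η / 2) ^ 2 + 2 * Real.sqrt (Delta η)) / (1 + Real.sin (η / 2) ^ 2)

noncomputable def W1 (Λ : ℝ) : ℝ :=
  Λ ^ 2 * (Λ ^ 2 + 16 * Λ + 240) / ((Λ - 10) * (19 * Λ ^ 2 + 120 * Λ - 3600))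

noncomputable def W3 (Λ : ℝ) : ℝ :=
  (60 - Λ) ^ 2 * (Λ - 10) ^ 3 * (Λ - 12) ^ 2 /
    ((19 * Λ ^ 2 + 120 * Λ - 3600) * (Λ ^ 2 + 16 * Λ + 240) ^ 3)

/-! Write t = sin²(η/2) ∈ (0, 1/2]. Since √Δ ∈ [1, 15], Λᵃ(η) ∈ [4t, 10t], Λᵃ(π − η) ∈ [2, 10),
and both optic symbols lie in [12, 60]; the dispersion relation moreover gives
10 − Λᵃ(π − η) ≤ 125 t ≤ 32 Λᵃ(η). On these ranges W₁(Λ) = O(Λ²) near 0, W₁ ≳ Λ on [12, 60] and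
W₃ is bounded below near 0. The remaining singularities are the pole of W₁ at 10 and the factor
1 / Λᵃ(η); both are absorbed by the triple zero of W₃ at 10, via W₃(Λ) ≤ (10 − Λ)³ and
W₁(Λ) W₃(Λ) ≤ (10 − Λ)². -/

lemma Delta_mem_Icc (η : ℝ) : Delta η ∈ Set.Icc 1 225 := by
  have h0 := sq_nonneg (Real.cos (η / 2))
  have h1 := Real.cos_sq_le_one (η / 2)
  constructor <;> unfold Delta <;> nlinarith

lemma sqrt_Delta_mem_Icc (η : ℝ) : √(Delta η) ∈ Set.Icc 1 15 := by
  obtain ⟨h1, h225⟩ := Delta_mem_Icc η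
  constructor
  · exact Real.one_le_sqrt.mpr h1
  · exact Real.sqrt_le_left (by norm_num) |>.mpr (by linarith)

lemma Lama_mem_Icc (η : ℝ) :
    Lama η ∈ Set.Icc (4 * Real.sin (η / 2) ^ 2) (10 * Real.sin (η / 2) ^ 2) := by
  obtain ⟨hu1, hu15⟩ := sqrt_Delta_mem_Icc η
  have hc0 := sq_nonneg (Real.cos (η / 2))
  have hc1 := Real.cos_sq_le_one (η / 2)
  have hs0 := sq_nonneg (Real.sin (η / 2))
  rw [Lama]
  constructor
  · rw [le_div_iff₀ (by positivity)]; nlinarith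
  · rw [div_le_iff₀ (by positivity)]; nlinarith

lemma Lamo_mem_Icc (η : ℝ) : Lamo η ∈ Set.Icc 12 60 := by
  obtain ⟨hu1, hu15⟩ := sqrt_Delta_mem_Icc η
  have hc0 := sq_nonneg (Real.cos (η / 2))
  have hc1 := Real.cos_sq_le_one (η / 2)
  have hs0 := sq_nonneg (Real.sin (η / 2))
  have hs1 := Real.sin_sq_le_one (η / 2)
  rw [Lamo]
  constructor
  · rw [le_div_iff₀ (by positivity)]; nlinarith
  · rw [div_le_iff₀ (by positivity)]; nlinarith

/-- The dispersion relation of the scheme, of which `Lama η` is the smaller root. -/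
lemma cos_sq_half_mul_eq_Lama (η : ℝ) :
    Real.cos (η / 2) ^ 2 * (Lama η ^ 2 + 16 * Lama η + 240)
      = 2 * (Lama η - 10) * (Lama η - 12) := by
  set s := Real.sin (η / 2) ^ 2
  set c := Real.cos (η / 2) ^ 2
  have hsc : s + c = 1 := Real.sin_sq_add_cos_sq (η / 2)
  have hu : √(Delta η) ^ 2 = 1 + 268 * c - 44 * c ^ 2 := by
    rw [Real.sq_sqrt (by linarith [(Delta_mem_Icc η).1]), Delta]
    ring
  have hD : 0 < 11 + 4 * c + √(Delta η) := by positivity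
  rw [Lama]
  field_simp
  linear_combination
    (240 * (11 + 4 * c + √(Delta η)) ^ 2 + 14400 * s * (c - 2)) * hsc - 240 * s * hu

lemma ten_sub_Lama_le (η : ℝ) : 10 - Lama η ≤ 125 * Real.cos (η / 2) ^ 2 := by
  obtain ⟨h4, h10⟩ := Lama_mem_Icc η
  have hs0 := sq_nonneg (Real.sin (η / 2))
  have hs1 := Real.sin_sq_le_one (η / 2)
  have hc0 := sq_nonneg (Real.cos (η / 2))
  have hP : Lama η ^ 2 + 16 * Lama η + 240 ≤ 500 := by nlinarith
  nlinarith [cos_sq_half_mul_eq_Lama η, mul_le_mul_of_nonneg_left hP hc0,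
    mul_nonneg (by linarith : 0 ≤ 10 - Lama η) (by linarith : 0 ≤ 10 - Lama η)]

lemma sin_pi_sub_div_two (η : ℝ) : Real.sin ((π - η) / 2) = Real.cos (η / 2) := by
  rw [sub_div, Real.sin_pi_div_two_sub]

lemma cos_pi_sub_div_two (η : ℝ) : Real.cos ((π - η) / 2) = Real.sin (η / 2) := by
  rw [sub_div, Real.cos_pi_div_two_sub]

lemma sin_sq_half_mem_Ioc {η : ℝ} (hη : η ∈ Set.Ioc 0 (π / 2)) :
    Real.sin (η / 2) ^ 2 ∈ Set.Ioc 0 (1 / 2) := by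
  obtain ⟨h0, hπ⟩ := hη
  have hcos : 0 ≤ Real.cos η := Real.cos_nonneg_of_mem_Icc ⟨by linarith [Real.pi_pos], hπ⟩
  have hdouble := Real.cos_two_mul_eq_one_sub (η / 2)
  rw [mul_div_cancel₀ η two_ne_zero] at hdouble
  constructor
  · exact pow_pos (Real.sin_pos_of_pos_of_lt_pi (by linarith) (by linarith [Real.pi_pos])) 2
  · linarith

-- Forms in which every factor is positive for `0 ≤ Λ < 10`.
lemma W1_eq (Λ : ℝ) :
    W1 Λ = Λ ^ 2 * (Λ ^ 2 + 16 * Λ + 240) / ((10 - Λ) * (3600 - 120 * Λ - 19 * Λ ^ 2)) := by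
  rw [W1]
  congr 1
  ring

lemma W3_eq (Λ : ℝ) :
    W3 Λ = (10 - Λ) ^ 3 * ((60 - Λ) ^ 2 * (12 - Λ) ^ 2 /
      ((3600 - 120 * Λ - 19 * Λ ^ 2) * (Λ ^ 2 + 16 * Λ + 240) ^ 3)) := by
  rw [W3, mul_div_assoc', ← neg_div_neg_eq]
  ring_nf

lemma W1_mem_Icc {Λ : ℝ} (h0 : 0 ≤ Λ) (h5 : Λ ≤ 5) : W1 Λ ∈ Set.Icc 0 (Λ ^ 2) := by
  have hden : 345 ≤ (10 - Λ) * (3600 - 120 * Λ - 19 * Λ ^ 2) := by nlinarith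
  have hP : 0 ≤ Λ ^ 2 + 16 * Λ + 240 := by positivity
  rw [W1_eq, mul_div_assoc]
  constructor
  · positivity
  · refine mul_le_of_le_one_right (sq_nonneg Λ) ?_
    rw [div_le_one (by linarith)]
    nlinarith

lemma le_W1 {Λ : ℝ} (h12 : 12 ≤ Λ) (h60 : Λ ≤ 60) : Λ ≤ 2000 * W1 Λ := by
  have hQ : 0 < 19 * Λ ^ 2 + 120 * Λ - 3600 := by nlinarith
  have hQ' : 19 * Λ ^ 2 + 120 * Λ - 3600 ≤ 72000 := by nlinarith
  rw [W1, mul_div_assoc', le_div_iff₀ (by nlinarith)]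
  nlinarith [mul_le_mul (by linarith : Λ - 10 ≤ 50) hQ' hQ.le (by norm_num)]

lemma inv_le_W3 {Λ : ℝ} (h0 : 0 ≤ Λ) (h5 : Λ ≤ 5) : (10000 : ℝ)⁻¹ ≤ W3 Λ := by
  have hQ : 0 < 3600 - 120 * Λ - 19 * Λ ^ 2 := by nlinarith
  have hP : Λ ^ 2 + 16 * Λ + 240 ≤ 345 := by nlinarith
  have h10 : 0 ≤ 10 - Λ := by linarith
  rw [W3_eq]
  calc (10000 : ℝ)⁻¹ ≤ 5 ^ 3 * (55 ^ 2 * 7 ^ 2 / (3600 * 345 ^ 3)) := by norm_num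
    _ ≤ _ := by gcongr <;> nlinarith

lemma W3_mem_Icc {Λ : ℝ} (h0 : 0 ≤ Λ) (h10 : Λ ≤ 10) : W3 Λ ∈ Set.Icc 0 ((10 - Λ) ^ 3) := by
  have hQ : 500 ≤ 3600 - 120 * Λ - 19 * Λ ^ 2 := by nlinarith
  have hP : 240 ≤ Λ ^ 2 + 16 * Λ + 240 := by nlinarith
  have h10' : 0 ≤ 10 - Λ := by linarith
  rw [W3_eq]
  constructor
  · positivity
  · refine mul_le_of_le_one_right (by positivity) ?_
    rw [div_le_one (by positivity)]
    calc (60 - Λ) ^ 2 * (12 - Λ) ^ 2 ≤ 60 ^ 2 * 12 ^ 2 := by gcongr <;> linarith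
      _ ≤ 500 * 240 ^ 3 := by norm_num
      _ ≤ _ := by gcongr

lemma W1_mul_W3_mem_Icc {Λ : ℝ} (h0 : 0 ≤ Λ) (h10 : Λ < 10) :
    W1 Λ * W3 Λ ∈ Set.Icc 0 ((10 - Λ) ^ 2) := by
  have hQ : 500 ≤ 3600 - 120 * Λ - 19 * Λ ^ 2 := by nlinarith
  have hP : 240 ≤ Λ ^ 2 + 16 * Λ + 240 := by nlinarith
  have h10' : 0 < 10 - Λ := by linarith
  have key : W1 Λ * W3 Λ = (10 - Λ) ^ 2 * (Λ ^ 2 * (60 - Λ) ^ 2 * (12 - Λ) ^ 2 /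
      ((3600 - 120 * Λ - 19 * Λ ^ 2) ^ 2 * (Λ ^ 2 + 16 * Λ + 240) ^ 2)) := by
    rw [W1_eq, W3_eq]
    field_simp
  rw [key]
  constructor
  · positivity
  · refine mul_le_of_le_one_right (by positivity) ?_
    rw [div_le_one (by positivity)]
    calc Λ ^ 2 * (60 - Λ) ^ 2 * (12 - Λ) ^ 2 ≤ 10 ^ 2 * 60 ^ 2 * 12 ^ 2 := by
          gcongr <;> linarith
      _ ≤ 500 ^ 2 * 240 ^ 2 := by norm_num
      _ ≤ _ := by gcongr

lemma abs_one_add_div_mul_W1_div_le {a o : ℝ} (ha : 0 < a) (ha5 : a ≤ 5)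
    (ho : o ∈ Set.Icc 12 60) : |1 + (o / a) * (W1 a / W1 o)| ≤ 10001 := by
  obtain ⟨hWa0, hWa⟩ := W1_mem_Icc ha.le ha5
  have hWo := le_W1 ho.1 ho.2
  have hWo0 : 0 < W1 o := by linarith [ho.1]
  have hoW : o / W1 o ≤ 2000 := by rw [div_le_iff₀ hWo0]; linarith
  have hWaa : W1 a / a ≤ 5 := by rw [div_le_iff₀ ha]; nlinarith
  have ho0 : 0 ≤ o := by linarith [ho.1]
  rw [show (o / a) * (W1 a / W1 o) = (o / W1 o) * (W1 a / a) by ring,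
    abs_of_nonneg (by positivity)]
  calc 1 + o / W1 o * (W1 a / a) ≤ 1 + 2000 * 5 := by gcongr
    _ = 10001 := by norm_num

lemma abs_one_add_W1_div_le {a o : ℝ} (ha : 0 ≤ a) (ha5 : a ≤ 5)
    (ho : o ∈ Set.Icc 12 60) : |1 + W1 a / W1 o| ≤ 5000 := by
  obtain ⟨hWa0, hWa⟩ := W1_mem_Icc ha ha5
  have hWo : 3 / 500 ≤ W1 o := by linarith [le_W1 ho.1 ho.2, ho.1]
  rw [abs_of_nonneg (by positivity)]
  calc 1 + W1 a / W1 o ≤ 1 + 5 ^ 2 / (3 / 500) := by gcongr; nlinarith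
    _ ≤ 5000 := by norm_num

lemma abs_one_add_W1_div_mul_W3_div_le {a b c : ℝ} (ha : 0 ≤ a) (ha5 : a ≤ 5)
    (hb : 0 ≤ b) (hb10 : b < 10) (hc : c ∈ Set.Icc 12 60) :
    |(1 + W1 b / W1 c) * (W3 b / W3 a)| ≤ 10 ^ 9 := by
  have hWc : 3 / 500 ≤ W1 c := by linarith [le_W1 hc.1 hc.2, hc.1]
  have hW3a := inv_le_W3 ha ha5
  obtain ⟨hW3b0, hW3b⟩ := W3_mem_Icc hb hb10.le
  obtain ⟨hWWb0, hWWb⟩ := W1_mul_W3_mem_Icc hb hb10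
  have hu : 10 - b ≤ 10 := by linarith
  have hu0 : 0 ≤ 10 - b := by linarith
  rw [show (1 + W1 b / W1 c) * (W3 b / W3 a) = (W3 b + W1 b * W3 b / W1 c) / W3 a by
    field_simp]
  rw [abs_of_nonneg (by positivity), div_le_iff₀ (by positivity)]
  calc W3 b + W1 b * W3 b / W1 c ≤ 10 ^ 3 + 10 ^ 2 / (3 / 500) := by
        gcongr
        · exact hW3b.trans (by gcongr)
        · exact hWWb.trans (by gcongr)
    _ ≤ 10 ^ 9 * 10000⁻¹ := by norm_num
    _ ≤ 10 ^ 9 * W3 a := by gcongr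

lemma abs_div_mul_one_add_div_mul_W1_div_mul_W3_div_le {a b c : ℝ} (ha : 0 < a) (ha5 : a ≤ 5)
    (hb : 0 < b) (hb10 : b < 10) (hba : 10 - b ≤ 32 * a) (hc : c ∈ Set.Icc 12 60) :
    |(b / a) * (1 + (c / b) * (W1 b / W1 c)) * (W3 b / W3 a)| ≤ 10 ^ 10 := by
  have hWc := le_W1 hc.1 hc.2
  have hWc0 : 0 < W1 c := by linarith [hc.1]
  have hcW : c / W1 c ≤ 2000 := by rw [div_le_iff₀ hWc0]; linarith
  have hc0 : 0 ≤ c := by linarith [hc.1]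
  have hW3a := inv_le_W3 ha.le ha5
  obtain ⟨hW3b0, hW3b⟩ := W3_mem_Icc hb.le hb10.le
  obtain ⟨hWWb0, hWWb⟩ := W1_mul_W3_mem_Icc hb.le hb10
  have hu : 10 - b ≤ 10 := by linarith
  have hu0 : 0 ≤ 10 - b := by linarith
  rw [show (b / a) * (1 + (c / b) * (W1 b / W1 c)) * (W3 b / W3 a)
      = (b * W3 b + (c / W1 c) * (W1 b * W3 b)) / (a * W3 a) by field_simp]
  rw [abs_of_nonneg (by positivity), div_le_iff₀ (by positivity)]
  calc b * W3 b + (c / W1 c) * (W1 b * W3 b)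
      ≤ 10 * (10 - b) ^ 3 + 2000 * (10 - b) ^ 2 := by gcongr
    _ ≤ 10 * (10 ^ 2 * (32 * a)) + 2000 * (10 * (32 * a)) := by
        gcongr
        · nlinarith [pow_le_pow_left₀ hu0 hu 2]
        · nlinarith
    _ ≤ 10 ^ 10 * (a * 10000⁻¹) := by nlinarith
    _ ≤ 10 ^ 10 * (a * W3 a) := by gcongr

theorem stmt_15 :
    ∃ C > (0 : ℝ), ∀ η ∈ Set.Ioc (0 : ℝ) (Real.pi / 2),
      Lama η ≠ 0 ∧ Lama (Real.pi - η) ≠ 0 ∧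
      W1 (Lamo η) ≠ 0 ∧ W1 (Lamo (Real.pi - η)) ≠ 0 ∧ W3 (Lama η) ≠ 0 ∧
      |1 + (Lamo η / Lama η) * (W1 (Lama η) / W1 (Lamo η))| ≤ C ∧
      |1 + W1 (Lama η) / W1 (Lamo η)| ≤ C ∧
      |(1 + W1 (Lama (Real.pi - η)) / W1 (Lamo (Real.pi - η)))
          * (W3 (Lama (Real.pi - η)) / W3 (Lama η))| ≤ C ∧
      |(Lama (Real.pi - η) / Lama η)
          * (1 + (Lamo (Real.pi - η) / Lama (Real.pi - η))
              * (W1 (Lama (Real.pi - η)) / W1 (Lamo (Real.pi - η))))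
          * (W3 (Lama (Real.pi - η)) / W3 (Lama η))| ≤ C := by
  refine ⟨10 ^ 10, by norm_num, fun η hη => ?_⟩
  obtain ⟨ht0, ht⟩ := sin_sq_half_mem_Ioc hη
  have hsc := Real.sin_sq_add_cos_sq (η / 2)
  obtain ⟨ha4, ha10⟩ := Lama_mem_Icc η
  obtain ⟨hb4, hb10⟩ := Lama_mem_Icc (π - η)
  have hba := ten_sub_Lama_le (π - η)
  rw [sin_pi_sub_div_two] at hb4 hb10
  rw [cos_pi_sub_div_two] at hba
  have ho := Lamo_mem_Icc η
  have hc := Lamo_mem_Icc (π - η)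
  have hWo : 0 < W1 (Lamo η) := by linarith [le_W1 ho.1 ho.2, ho.1]
  have hWc : 0 < W1 (Lamo (π - η)) := by linarith [le_W1 hc.1 hc.2, hc.1]
  have ha : 0 < Lama η := by linarith
  have ha5 : Lama η ≤ 5 := by linarith
  have hb : 0 < Lama (π - η) := by linarith
  have hb10' : Lama (π - η) < 10 := by linarith
  have hW3a : 0 < W3 (Lama η) := by linarith [inv_le_W3 ha.le ha5]
  refine ⟨ha.ne', hb.ne', hWo.ne', hWc.ne', hW3a.ne', ?_, ?_, ?_, ?_⟩
  · exact (abs_one_add_div_mul_W1_div_le ha ha5 ho).trans (by norm_num)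
  · exact (abs_one_add_W1_div_le ha.le ha5 ho).trans (by norm_num)
  · exact (abs_one_add_W1_div_mul_W3_div_le ha.le ha5 hb.le hb10' hc).trans (by norm_num)
  · exact abs_div_mul_one_add_div_mul_W1_div_mul_W3_div_le ha ha5 hb hb10' (by linarith) hc
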